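/- arXiv:1809.09787 — 3 statements merged into one kernel-verified Lean document; each statement's English description precedes it below -/
import Mathlib

section
/- Fix N ≥ 1 and 1/2 ≤ s < 1. Define m : ℝ → ℝ by m(k) = 1 for |k| ≤ N and m(k) = |k|^{s−1}N^{1−s} for |k| > N. If |k2|, |k3| ≤ N/2 and |k4| ≥ N, and k1 = −(k2 + k3 + k4), then |1 − m(k2 + k3 + k4)/(m(k2)m(k3)m(k4))| ≤ C(|k2| + |k3|)/|k4| for a constant C depending only on s. -/
open Real

/-! Writing `⟨k⟩_N := max |k| N`, the multiplier is `m(k) = (N / ⟨k⟩_N)^{1-s}`, so the quotient in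
question is `(⟨k₄⟩_N / ⟨k⟩_N)^{1-s}` with `k = k₂ + k₃ + k₄`. Since `x ↦ x^{1-s}` moves no point
farther from `1` and `⟨·⟩_N` is `1`-Lipschitz, its distance to `1` is at most
`|k₂ + k₃| / ⟨k⟩_N ≤ 2 (|k₂| + |k₃|) / |k₄|`. -/

theorem Real.abs_one_sub_rpow_le_abs_one_sub {x p : ℝ} (hx : 0 < x) (hp0 : 0 ≤ p) (hp1 : p ≤ 1) :
    |1 - x ^ p| ≤ |1 - x| := by
  rcases le_total x 1 with hx1 | hx1
  · have h_lower : x ≤ x ^ p := by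
      simpa using rpow_le_rpow_of_exponent_ge hx hx1 hp1
    have h_upper : x ^ p ≤ 1 := rpow_le_one hx.le hx1 hp0
    rw [abs_of_nonneg (by linarith), abs_of_nonneg (by linarith)]
    linarith
  · have h_lower : 1 ≤ x ^ p := one_le_rpow hx1 hp0
    have h_upper : x ^ p ≤ x := by simpa using rpow_le_rpow_of_exponent_le hx1 hp1
    rw [abs_of_nonpos (by linarith), abs_of_nonpos (by linarith)]
    linarith

theorem abs_one_sub_div_le {A B a : ℝ} (hA : 0 < A) (hB : 0 < B) (hAB : |A - B| ≤ a)
    (hBA : B ≤ 2 * A) : |1 - B / A| ≤ 2 * a / B := by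
  have ha : 0 ≤ a := (abs_nonneg _).trans hAB
  calc |1 - B / A| = |A - B| / A := by rw [one_sub_div hA.ne', abs_div, abs_of_pos hA]
    _ ≤ a / A := by gcongr
    _ ≤ 2 * a / B := by rw [div_le_div_iff₀ hA hB]; nlinarith

noncomputable def iMultiplier (s N k : ℝ) : ℝ :=
  if |k| ≤ N then 1 else |k| ^ (s - 1) * N ^ (1 - s)

theorem iMultiplier_of_abs_le {s N k : ℝ} (hk : |k| ≤ N) : iMultiplier s N k = 1 :=
  if_pos hk

theorem iMultiplier_eq_rpow {s N : ℝ} (hN : 0 < N) (k : ℝ) :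
    iMultiplier s N k = (N / max |k| N) ^ (1 - s) := by
  have hmax : 0 < max |k| N := hN.trans_le (le_max_right _ _)
  rw [div_rpow hN.le hmax.le, div_eq_mul_inv, ← rpow_neg hmax.le, neg_sub, mul_comm]
  unfold iMultiplier
  split_ifs with hk
  · rw [max_eq_right hk, ← rpow_add hN]
    simp
  · rw [max_eq_left (not_le.mp hk).le]

theorem iMultiplier_div {s N : ℝ} (hN : 0 < N) (k l : ℝ) :
    iMultiplier s N k / iMultiplier s N l = (max |l| N / max |k| N) ^ (1 - s) := by
  have hk : 0 < max |k| N := hN.trans_le (le_max_right _ _)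
  have hl : 0 < max |l| N := hN.trans_le (le_max_right _ _)
  rw [iMultiplier_eq_rpow hN, iMultiplier_eq_rpow hN, ← div_rpow (by positivity) (by positivity)]
  congr 1
  field_simp

/-- Mean value theorem bound for the I-method multiplier in the low-low-high case:
if `|k2|, |k3| ≤ N/2`, `|k4| ≥ N` and `k1 = −(k2+k3+k4)`, then
`|1 − m(k2+k3+k4)/(m(k2)m(k3)m(k4))| ≤ C(|k2|+|k3|)/|k4|`, `C = C(s)`. -/
theorem stmt_3 (s : ℝ) (hs : 1 / 2 ≤ s) (hs1 : s < 1) :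
    ∃ C > 0, ∀ N k1 k2 k3 k4 : ℝ, 1 ≤ N →
      |k2| ≤ N / 2 → |k3| ≤ N / 2 → N ≤ |k4| → k1 = -(k2 + k3 + k4) →
      (fun m : ℝ → ℝ =>
        |1 - m (k2 + k3 + k4) / (m k2 * m k3 * m k4)| ≤ C * (|k2| + |k3|) / |k4|)
        (fun k => if |k| ≤ N then 1 else |k| ^ (s - 1) * N ^ (1 - s)) := by
  refine ⟨2, two_pos, fun N k1 k2 k3 k4 hN hk2 hk3 hk4 _ => ?_⟩
  change |1 - iMultiplier s N (k2 + k3 + k4) /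
      (iMultiplier s N k2 * iMultiplier s N k3 * iMultiplier s N k4)| ≤ _
  have hN0 : 0 < N := one_pos.trans_le hN
  set k := k2 + k3 + k4
  set A := max |k| N
  have hA : 0 < A := hN0.trans_le (le_max_right _ _)
  have hk4_pos : 0 < |k4| := hN0.trans_le hk4
  have hB : max |k4| N = |k4| := max_eq_left hk4
  have hAB : |(A - |k4|)| ≤ |k2| + |k3| := by
    calc |(A - |k4|)| = |max |k| N - max |k4| N| := by rw [hB]
      _ ≤ |k - k4| := (abs_max_sub_max_le_abs _ _ _).trans (abs_abs_sub_abs_le_abs_sub _ _)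
      _ = |k2 + k3| := by rw [add_sub_cancel_right]
      _ ≤ |k2| + |k3| := abs_add_le _ _
  have hBA : |k4| ≤ 2 * A := by
    linarith [(abs_le.mp hAB).1, le_max_right |k| N]
  rw [iMultiplier_of_abs_le (k := k2) (by linarith), iMultiplier_of_abs_le (k := k3) (by linarith),
    one_mul, one_mul, iMultiplier_div hN0, hB]
  exact (abs_one_sub_rpow_le_abs_one_sub (div_pos hk4_pos hA) (by linarith) (by linarith)).trans
    (abs_one_sub_div_le hA hk4_pos hAB hBA)
end

section
/- Fix N ≥ 1 and 1/2 ≤ s < 1. Define m(k) = 1 for |k| ≤ N and m(k) = |k|^{s−1}N^{1−s} for |k| > N. Suppose |k1| ~ |k2| ~ |k3| ~ |k4| ≥ N (all comparable with implicit constant 2, say) and k1 + k2 + k3 + k4 = 0. Then |1 − m(k1)/(m(k2)m(k3)m(k4))| ≤ C·N^{−1}·|k4| for a constant C depending only on s. -/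
open Real

/-! On `|k| ≥ N` the multiplier is `m(k) = (|k|/N)^(s-1)`. Comparable frequencies have
multipliers comparable up to the factor `2^|s-1|`, so the ratio `m(k₁)/(m(k₂)m(k₃)m(k₄))` is at
most `(2^|s-1|)³ (|k₁|/N)^(2(1-s))`, and `2(1-s) ≤ 1` because `s ≥ 1/2`. Finally `|k₁| ≤ 2|k₄|`. -/

lemma rpow_le_two_rpow_abs_mul_rpow {x y : ℝ} (hy : 0 < y) (hxy : x ≤ 2 * y) (hyx : y ≤ 2 * x)
    (a : ℝ) : x ^ a ≤ 2 ^ |a| * y ^ a := by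
  have hx : 0 < x := by linarith
  have hratio : (x / y) ^ a ≤ 2 ^ |a| := by
    rcases le_total 0 a with ha | ha
    · rw [abs_of_nonneg ha]
      exact rpow_le_rpow (by positivity) ((div_le_iff₀ hy).2 hxy) ha
    · rw [abs_of_nonpos ha, rpow_neg zero_le_two, ← inv_rpow zero_le_two]
      refine rpow_le_rpow_of_nonpos (by positivity) ?_ ha
      rw [le_div_iff₀ hy]
      linarith
  calc x ^ a = (x / y) ^ a * y ^ a := by
        rw [div_rpow hx.le hy.le, div_mul_cancel₀ _ (rpow_pos_of_pos hy a).ne']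
    _ ≤ 2 ^ |a| * y ^ a := by gcongr

lemma rpow_div_rpow_mul_rpow_mul_rpow_le {a x y z w : ℝ} (ha : -1 / 2 ≤ a) (hx : 1 ≤ x)
    (hy : 0 < y) (hz : 0 < z) (hw : 0 < w) (hxy : x ≤ 2 * y) (hyx : y ≤ 2 * x)
    (hxz : x ≤ 2 * z) (hzx : z ≤ 2 * x) (hxw : x ≤ 2 * w) (hwx : w ≤ 2 * x) :
    x ^ a / (y ^ a * z ^ a * w ^ a) ≤ (2 ^ |a|) ^ 3 * x := by
  have hx0 : 0 < x := by linarith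
  have hcube : (x ^ a) ^ 3 ≤ (2 ^ |a|) ^ 3 * (y ^ a * z ^ a * w ^ a) := by
    calc (x ^ a) ^ 3 = x ^ a * x ^ a * x ^ a := by ring
      _ ≤ (2 ^ |a| * y ^ a) * (2 ^ |a| * z ^ a) * (2 ^ |a| * w ^ a) := by
          gcongr
          · exact rpow_le_two_rpow_abs_mul_rpow hy hxy hyx a
          · exact rpow_le_two_rpow_abs_mul_rpow hz hxz hzx a
          · exact rpow_le_two_rpow_abs_mul_rpow hw hxw hwx a
      _ = (2 ^ |a|) ^ 3 * (y ^ a * z ^ a * w ^ a) := by ring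
  have hgrowth : 1 ≤ x * (x ^ a) ^ 2 := by
    rw [← rpow_natCast, ← rpow_mul hx0.le]
    nth_rewrite 1 [← rpow_one x]
    rw [← rpow_add hx0]
    exact one_le_rpow hx (by norm_num; linarith)
  rw [div_le_iff₀ (by positivity)]
  calc x ^ a ≤ x ^ a * (x * (x ^ a) ^ 2) := le_mul_of_one_le_right (by positivity) hgrowth
    _ = x * (x ^ a) ^ 3 := by ring
    _ ≤ x * ((2 ^ |a|) ^ 3 * (y ^ a * z ^ a * w ^ a)) := by gcongr
    _ = (2 ^ |a|) ^ 3 * x * (y ^ a * z ^ a * w ^ a) := by ring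

lemma iMultiplier_pos (s : ℝ) {N : ℝ} (hN : 0 < N) (k : ℝ) : 0 < iMultiplier s N k := by
  unfold iMultiplier
  split_ifs with hk
  · exact one_pos
  · have : 0 < |k| := by linarith
    positivity

lemma iMultiplier_of_le (s : ℝ) {N k : ℝ} (hN : 0 < N) (hk : N ≤ |k|) :
    iMultiplier s N k = (|k| / N) ^ (s - 1) := by
  rw [div_rpow (abs_nonneg k) hN.le, div_eq_mul_inv, ← rpow_neg hN.le, neg_sub, iMultiplier]
  split_ifs with hkN
  · rw [le_antisymm hkN hk, ← rpow_add hN]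
    simp
  · rfl

lemma iMultiplier_ratio_le {s N k₁ k₂ k₃ k₄ : ℝ} (hs : 1 / 2 ≤ s) (hN : 0 < N)
    (h₁ : N ≤ |k₁|) (h₂ : N ≤ |k₂|) (h₃ : N ≤ |k₃|) (h₄ : N ≤ |k₄|)
    (h₁₂ : |k₁| ≤ 2 * |k₂|) (h₂₁ : |k₂| ≤ 2 * |k₁|) (h₁₃ : |k₁| ≤ 2 * |k₃|)
    (h₃₁ : |k₃| ≤ 2 * |k₁|) (h₁₄ : |k₁| ≤ 2 * |k₄|) (h₄₁ : |k₄| ≤ 2 * |k₁|) :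
    iMultiplier s N k₁ / (iMultiplier s N k₂ * iMultiplier s N k₃ * iMultiplier s N k₄)
      ≤ (2 ^ |s - 1|) ^ 3 * (|k₁| / N) := by
  have hscale : ∀ {u v : ℝ}, u ≤ 2 * v → u / N ≤ 2 * (v / N) := fun h => by
    rw [← mul_div_assoc]
    gcongr
  have hpos : ∀ {k : ℝ}, N ≤ |k| → 0 < |k| / N := fun h => div_pos (hN.trans_le h) hN
  rw [iMultiplier_of_le s hN h₁, iMultiplier_of_le s hN h₂, iMultiplier_of_le s hN h₃,
    iMultiplier_of_le s hN h₄]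
  exact rpow_div_rpow_mul_rpow_mul_rpow_le (by linarith) ((one_le_div hN).2 h₁)
    (hpos h₂) (hpos h₃) (hpos h₄) (hscale h₁₂) (hscale h₂₁) (hscale h₁₃) (hscale h₃₁)
    (hscale h₁₄) (hscale h₄₁)

theorem stmt_4_general (s : ℝ) (hs : 1 / 2 ≤ s) :
    ∃ C > 0, ∀ N k1 k2 k3 k4 : ℝ, 1 ≤ N →
      N ≤ |k1| → N ≤ |k2| → N ≤ |k3| → N ≤ |k4| →
      |k1| ≤ 2 * |k2| → |k2| ≤ 2 * |k1| →
      |k1| ≤ 2 * |k3| → |k3| ≤ 2 * |k1| →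
      |k1| ≤ 2 * |k4| → |k4| ≤ 2 * |k1| →
      |k2| ≤ 2 * |k3| → |k3| ≤ 2 * |k2| →
      |k2| ≤ 2 * |k4| → |k4| ≤ 2 * |k2| →
      |k3| ≤ 2 * |k4| → |k4| ≤ 2 * |k3| →
      k1 + k2 + k3 + k4 = 0 →
      (fun m : ℝ → ℝ =>
        |1 - m k1 / (m k2 * m k3 * m k4)| ≤ C * N⁻¹ * |k4|)
        (fun k => if |k| ≤ N then 1 else |k| ^ (s - 1) * N ^ (1 - s)) := by
  refine ⟨1 + 2 * (2 ^ |s - 1|) ^ 3, by positivity, ?_⟩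
  intro N k1 k2 k3 k4 hN h1 h2 h3 h4 h12 h21 h13 h31 h14 h41 _ _ _ _ _ _ _
  have hN0 : 0 < N := by linarith
  change |1 - iMultiplier s N k1 / (iMultiplier s N k2 * iMultiplier s N k3 *
    iMultiplier s N k4)| ≤ _
  have hR := iMultiplier_ratio_le hs hN0 h1 h2 h3 h4 h12 h21 h13 h31 h14 h41
  have hR0 := div_pos (iMultiplier_pos s hN0 k1) (mul_pos (mul_pos (iMultiplier_pos s hN0 k2)
    (iMultiplier_pos s hN0 k3)) (iMultiplier_pos s hN0 k4))
  have ht4 : 1 ≤ |k4| / N := (one_le_div hN0).2 h4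
  have ht14 : |k1| / N ≤ 2 * (|k4| / N) := by
    rw [← mul_div_assoc]
    gcongr
  calc _ ≤ 1 + iMultiplier s N k1 /
        (iMultiplier s N k2 * iMultiplier s N k3 * iMultiplier s N k4) :=
        abs_le.2 ⟨by linarith, by linarith⟩
    _ ≤ |k4| / N + (2 ^ |s - 1|) ^ 3 * (2 * (|k4| / N)) := by gcongr; exact hR.trans (by gcongr)
    _ = (1 + 2 * (2 ^ |s - 1|) ^ 3) * N⁻¹ * |k4| := by ring

/-- I-method multiplier bound in the all-high frequency case: if all frequencies are
comparable (with constant 2), at least `N` in size, and sum to zero, then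
`|1 − m(k1)/(m(k2)m(k3)m(k4))| ≤ C N⁻¹ |k4|`, `C = C(s)`. -/
theorem stmt_4 (s : ℝ) (hs : 1 / 2 ≤ s) (hs1 : s < 1) :
    ∃ C > 0, ∀ N k1 k2 k3 k4 : ℝ, 1 ≤ N →
      N ≤ |k1| → N ≤ |k2| → N ≤ |k3| → N ≤ |k4| →
      |k1| ≤ 2 * |k2| → |k2| ≤ 2 * |k1| →
      |k1| ≤ 2 * |k3| → |k3| ≤ 2 * |k1| →
      |k1| ≤ 2 * |k4| → |k4| ≤ 2 * |k1| →
      |k2| ≤ 2 * |k3| → |k3| ≤ 2 * |k2| →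
      |k2| ≤ 2 * |k4| → |k4| ≤ 2 * |k2| →
      |k3| ≤ 2 * |k4| → |k4| ≤ 2 * |k3| →
      k1 + k2 + k3 + k4 = 0 →
      (fun m : ℝ → ℝ =>
        |1 - m k1 / (m k2 * m k3 * m k4)| ≤ C * N⁻¹ * |k4|)
        (fun k => if |k| ≤ N then 1 else |k| ^ (s - 1) * N ^ (1 - s)) :=
  stmt_4_general s hs
end

section
/- Let û : ℤ → ℂ be a sequence with û(−k) = conj(û(k)) (so that u is real-valued). Then the Fourier coefficient at k of (u² − (1/2π)‖u‖²_{L²})∂_x u equals i(k/3)·Σ_{k1+k2+k3=k, (k1+k2)(k2+k3)(k3+k1)≠0} û(k1)û(k2)û(k3) − ik|û(k)|²û(k). -/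
open Complex

private lemma aux_indic {f : ℤ × ℤ → ℂ} (hf : Summable f) (P : ℤ × ℤ → Prop) [DecidablePred P] :
    Summable fun p => if P p then f p else 0 := by
  have h := hf.indicator {p | P p}
  refine h.congr fun p => ?_
  by_cases hp : P p <;> simp [Set.indicator_apply, hp]

private lemma aux_odd (a : ℤ → ℂ) (k : ℤ) (hreal : ∀ n : ℤ, a (-n) = starRingEnd ℂ (a n))
    (hS : Summable fun m : ℤ =>
      if k + m ≠ 0 then a k * a m * (Complex.I * ((-m : ℤ) : ℂ)) * a (-m) else 0) :
    (∑' m : ℤ, if k + m ≠ 0 then a k * a m * (Complex.I * ((-m : ℤ) : ℂ)) * a (-m) else 0)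
      = -(Complex.I * (k : ℂ) * (Complex.normSq (a k) : ℂ) * a k) := by
  set F : ℤ → ℂ := fun m =>
    if k + m ≠ 0 then a k * a m * (Complex.I * ((-m : ℤ) : ℂ)) * a (-m) else 0 with hF
  set c : ℂ := -(Complex.I * (k : ℂ) * (Complex.normSq (a k) : ℂ) * a k) with hc
  have hFk : F k = c := by
    by_cases hk : k = 0
    · simp [hF, hc, hk]
    · have h1 : k + k ≠ 0 := by omega
      simp only [hF, h1, if_pos, ne_eq, not_false_iff, if_true]
      rw [hreal k, hc]
      push_cast
      linear_combination (-(Complex.I) * (k : ℂ) * a k) * Complex.mul_conj (a k)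
  have key : ∀ m : ℤ, F m + F (-m) = if m = k ∨ m = -k then c else 0 := by
    intro m
    by_cases h1 : m = k
    · rw [h1]
      have hcond : (k = k ∨ k = -k) := Or.inl rfl
      rw [if_pos hcond]
      by_cases hk : k = 0
      · have hF0 : F k = 0 := by simp [hF, hk]
        rw [hk] at hF0 ⊢
        rw [neg_zero, hF0, add_zero, hc, hk]
        simp
      · have hx : k + -k = 0 := by ring
        have hF0 : F (-k) = 0 := by simp [hF, hx]
        rw [hF0, add_zero, hFk]
    · by_cases h2 : m = -k
      · subst h2
        have hx : k + -k = 0 := by ring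
        have : F (-k) = 0 := by simp [hF, hx]
        rw [this, neg_neg, hFk, zero_add]
        simp
      · have c1 : k + m ≠ 0 := by omega
        have c2 : k + -m ≠ 0 := by omega
        simp only [hF, c1, c2, ne_eq, not_false_iff, if_true, neg_neg, h1, h2, or_self, if_false]
        push_cast
        ring
  have hneg : Summable fun m : ℤ => F (-m) := hS.comp_injective neg_injective
  have e1 : (∑' m : ℤ, F (-m)) = ∑' m, F m := (Equiv.neg ℤ).tsum_eq F
  have e2 : (∑' m : ℤ, (F m + F (-m))) = (∑' m, F m) + ∑' m, F (-m) := Summable.tsum_add hS hneg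
  have e3 : (∑' m : ℤ, (if m = k ∨ m = -k then c else 0)) = 2 * ∑' m, F m := by
    rw [← funext key, e2, e1]; ring
  have e4 : (∑' m : ℤ, (if m = k ∨ m = -k then c else 0)) = 2 * c := by
    by_cases hk : k = 0
    · have hc0 : c = 0 := by simp [hc, hk]
      subst hk
      simp [hc0]
    · have hne : k ≠ -k := by omega
      rw [tsum_eq_sum (s := ({k, -k} : Finset ℤ)) (by
        intro b hb
        simp only [Finset.mem_insert, Finset.mem_singleton] at hb
        push_neg at hb
        simp [hb.1, hb.2])]
      rw [Finset.sum_pair hne]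
      simp
      ring
  exact mul_left_cancel₀ (two_ne_zero) (e3.symm.trans e4)

section Main
variable (a : ℤ → ℂ) (k : ℤ)

private def eE (p : ℤ × ℤ) : ℂ :=
  a p.1 * a p.2 * (Complex.I * ((k - p.1 - p.2 : ℤ) : ℂ)) * a (k - p.1 - p.2)

private def fF (p : ℤ × ℤ) : ℂ := if p.1 + p.2 ≠ 0 then eE a k p else 0

private def NR (p : ℤ × ℤ) : Prop :=
  p.1 + p.2 ≠ 0 ∧ p.2 + (k - p.1 - p.2) ≠ 0 ∧ (k - p.1 - p.2) + p.1 ≠ 0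

instance : DecidablePred (NR k) := fun p => by unfold NR; infer_instance

private def gG (p : ℤ × ℤ) : ℂ := if NR k p then eE a k p else 0

private def fA (p : ℤ × ℤ) : ℂ :=
  if p.1 + p.2 ≠ 0 ∧ p.2 + (k - p.1 - p.2) = 0 then eE a k p else 0

private def fB (p : ℤ × ℤ) : ℂ :=
  if p.1 + p.2 ≠ 0 ∧ (k - p.1 - p.2) + p.1 = 0 then eE a k p else 0

private def fAB (p : ℤ × ℤ) : ℂ :=
  if p.1 + p.2 ≠ 0 ∧ p.2 + (k - p.1 - p.2) = 0 ∧ (k - p.1 - p.2) + p.1 = 0 then eE a k p else 0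

private lemma pointwise (p : ℤ × ℤ) :
    fF a k p + fAB a k p = gG a k p + fA a k p + fB a k p := by
  unfold fF fAB gG fA fB NR
  simp only [show (p.2 + (k - p.1 - p.2) = 0) ↔ (k - p.1 = 0) from by omega,
      show ((k - p.1 - p.2) + p.1 = 0) ↔ (k - p.2 = 0) from by omega, ne_eq]
  by_cases h1 : p.1 + p.2 = 0 <;> by_cases h2 : k - p.1 = 0 <;>
    by_cases h3 : k - p.2 = 0 <;> simp [h1, h2, h3]

private lemma gG_eq : gG a k = fun p => if NR k p then fF a k p else 0 := by
  funext p
  unfold gG fF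
  by_cases h : NR k p
  · rw [if_pos h, if_pos h, if_pos h.1]
  · rw [if_neg h, if_neg h]

private lemma fA_eq : fA a k = fun p =>
    if p.1 + p.2 ≠ 0 ∧ p.2 + (k - p.1 - p.2) = 0 then fF a k p else 0 := by
  funext p
  unfold fA fF
  by_cases h : p.1 + p.2 ≠ 0 ∧ p.2 + (k - p.1 - p.2) = 0
  · rw [if_pos h, if_pos h, if_pos h.1]
  · rw [if_neg h, if_neg h]

private lemma fB_eq : fB a k = fun p =>
    if p.1 + p.2 ≠ 0 ∧ (k - p.1 - p.2) + p.1 = 0 then fF a k p else 0 := by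
  funext p
  unfold fB fF
  by_cases h : p.1 + p.2 ≠ 0 ∧ (k - p.1 - p.2) + p.1 = 0
  · rw [if_pos h, if_pos h, if_pos h.1]
  · rw [if_neg h, if_neg h]

private lemma fAB_eq : fAB a k = fun p =>
    if p.1 + p.2 ≠ 0 ∧ p.2 + (k - p.1 - p.2) = 0 ∧ (k - p.1 - p.2) + p.1 = 0
    then fF a k p else 0 := by
  funext p
  unfold fAB fF
  by_cases h : p.1 + p.2 ≠ 0 ∧ p.2 + (k - p.1 - p.2) = 0 ∧ (k - p.1 - p.2) + p.1 = 0
  · rw [if_pos h, if_pos h, if_pos h.1]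
  · rw [if_neg h, if_neg h]

private lemma hsg (hsf : Summable (fF a k)) : Summable (gG a k) := by
  rw [gG_eq]; exact aux_indic hsf _

private lemma hsA (hsf : Summable (fF a k)) : Summable (fA a k) := by
  rw [fA_eq]; exact aux_indic hsf _

private lemma hsB (hsf : Summable (fF a k)) : Summable (fB a k) := by
  rw [fB_eq]; exact aux_indic hsf _

private lemma hsAB (hsf : Summable (fF a k)) : Summable (fAB a k) := by
  rw [fAB_eq]; exact aux_indic hsf _

private lemma tsum_fA (hsf : Summable (fF a k))
    (hreal : ∀ n : ℤ, a (-n) = starRingEnd ℂ (a n)) :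
    (∑' p : ℤ × ℤ, fA a k p)
      = -(Complex.I * (k : ℂ) * (Complex.normSq (a k) : ℂ) * a k) := by
  have hinj : Function.Injective (fun m : ℤ => ((k, m) : ℤ × ℤ)) := by
    intro x y h; simpa using h
  have hsupp : Function.support (fA a k) ⊆ Set.range (fun m : ℤ => ((k, m) : ℤ × ℤ)) := by
    intro p hp
    simp only [Function.mem_support, fA, ne_eq, ite_eq_right_iff, not_forall] at hp
    obtain ⟨⟨h1, h2⟩, -⟩ := hp
    refine ⟨p.2, ?_⟩
    have : p.1 = k := by omega
    simp [← this]
  have key := hinj.tsum_eq (f := fA a k) hsupp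
  rw [← key]
  have heq : (fun m : ℤ => fA a k (k, m))
      = fun m : ℤ => if k + m ≠ 0 then a k * a m * (Complex.I * ((-m : ℤ) : ℂ)) * a (-m) else 0 := by
    funext m
    unfold fA eE
    by_cases h : k + m = 0
    · rw [if_neg (by simp; omega), if_neg (by simpa using h)]
    · rw [if_pos (by constructor <;> simp <;> omega), if_pos (by simpa using h)]
      rw [show k - k - m = -m from by ring]
  rw [heq]
  apply aux_odd a k hreal
  rw [← heq]
  exact (hsA a k hsf).comp_injective hinj

private lemma tsum_fB (hsf : Summable (fF a k))
    (hreal : ∀ n : ℤ, a (-n) = starRingEnd ℂ (a n)) :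
    (∑' p : ℤ × ℤ, fB a k p)
      = -(Complex.I * (k : ℂ) * (Complex.normSq (a k) : ℂ) * a k) := by
  have hinj : Function.Injective (fun m : ℤ => ((m, k) : ℤ × ℤ)) := by
    intro x y h; simpa using h
  have hsupp : Function.support (fB a k) ⊆ Set.range (fun m : ℤ => ((m, k) : ℤ × ℤ)) := by
    intro p hp
    simp only [Function.mem_support, fB, ne_eq, ite_eq_right_iff, not_forall] at hp
    obtain ⟨⟨h1, h2⟩, -⟩ := hp
    refine ⟨p.1, ?_⟩
    have : p.2 = k := by omega
    simp [← this]
  have key := hinj.tsum_eq (f := fB a k) hsupp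
  rw [← key]
  have heq : (fun m : ℤ => fB a k (m, k))
      = fun m : ℤ => if k + m ≠ 0 then a k * a m * (Complex.I * ((-m : ℤ) : ℂ)) * a (-m) else 0 := by
    funext m
    unfold fB eE
    by_cases h : k + m = 0
    · rw [if_neg (by simp; omega), if_neg (by simpa using h)]
    · rw [if_pos (by constructor <;> simp <;> omega), if_pos (by simpa using h)]
      rw [show k - m - k = -m from by ring]
      ring
  rw [heq]
  apply aux_odd a k hreal
  rw [← heq]
  exact (hsB a k hsf).comp_injective hinj

private lemma tsum_fAB (hreal : ∀ n : ℤ, a (-n) = starRingEnd ℂ (a n)) :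
    (∑' p : ℤ × ℤ, fAB a k p)
      = -(Complex.I * (k : ℂ) * (Complex.normSq (a k) : ℂ) * a k) := by
  rw [tsum_eq_single ((k, k) : ℤ × ℤ) (by
    intro p hp
    rw [fAB, if_neg]
    rintro ⟨h1, h2, h3⟩
    apply hp
    have e1 : p.1 = k := by omega
    have e2 : p.2 = k := by omega
    rw [Prod.ext_iff]; exact ⟨e1, e2⟩)]
  unfold fAB eE
  by_cases hk : k = 0
  · subst hk
    norm_num
  · rw [if_pos (by refine ⟨?_, ?_, ?_⟩ <;> simp <;> omega)]
    rw [show k - k - k = -k from by ring, hreal k]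
    push_cast
    linear_combination (-(Complex.I) * (k : ℂ) * a k) * Complex.mul_conj (a k)

end Main

section Sym
variable (a : ℤ → ℂ) (k : ℤ)

private def sig : ℤ × ℤ ≃ ℤ × ℤ where
  toFun p := (p.2, k - p.1 - p.2)
  invFun p := (k - p.1 - p.2, p.1)
  left_inv p := by
    refine Prod.ext ?_ ?_ <;> simp <;> ring
  right_inv p := by
    refine Prod.ext ?_ ?_ <;> simp <;> ring

private def g0 (p : ℤ × ℤ) : ℂ :=
  if NR k p then a p.1 * a p.2 * a (k - p.1 - p.2) else 0
private def g1 (p : ℤ × ℤ) : ℂ :=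
  if NR k p then a p.1 * a p.2 * a (k - p.1 - p.2) * (Complex.I * (p.1 : ℂ)) else 0
private def g2 (p : ℤ × ℤ) : ℂ :=
  if NR k p then a p.1 * a p.2 * a (k - p.1 - p.2) * (Complex.I * (p.2 : ℂ)) else 0
private def g3 (p : ℤ × ℤ) : ℂ :=
  if NR k p then a p.1 * a p.2 * a (k - p.1 - p.2) * (Complex.I * ((k - p.1 - p.2 : ℤ) : ℂ)) else 0

private lemma NR_sig (p : ℤ × ℤ) : NR k (sig k p) ↔ NR k p := by
  unfold NR sig
  simp only [Equiv.coe_fn_mk]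
  omega

private lemma g3_sig (p : ℤ × ℤ) : g3 a k (sig k p) = g1 a k p := by
  unfold g3 g1
  by_cases h : NR k p
  · rw [if_pos ((NR_sig k p).mpr h), if_pos h]
    show a (sig k p).1 * a (sig k p).2 * _ * _ = _
    simp only [sig, Equiv.coe_fn_mk]
    rw [show k - p.2 - (k - p.1 - p.2) = p.1 from by ring]
    ring
  · rw [if_neg (fun hc => h ((NR_sig k p).mp hc)), if_neg h]

private lemma g1_sig (p : ℤ × ℤ) : g1 a k (sig k p) = g2 a k p := by
  unfold g1 g2
  by_cases h : NR k p
  · rw [if_pos ((NR_sig k p).mpr h), if_pos h]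
    show a (sig k p).1 * a (sig k p).2 * _ * _ = _
    simp only [sig, Equiv.coe_fn_mk]
    rw [show k - p.2 - (k - p.1 - p.2) = p.1 from by ring]
    ring
  · rw [if_neg (fun hc => h ((NR_sig k p).mp hc)), if_neg h]

private lemma gG_eq_g3 : gG a k = g3 a k := by
  funext p
  unfold gG g3 eE
  by_cases h : NR k p
  · rw [if_pos h, if_pos h]; ring
  · rw [if_neg h, if_neg h]

private lemma sum3 (p : ℤ × ℤ) :
    g1 a k p + g2 a k p + g3 a k p = Complex.I * (k : ℂ) * g0 a k p := by
  unfold g1 g2 g3 g0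
  by_cases h : NR k p
  · rw [if_pos h, if_pos h, if_pos h, if_pos h]
    push_cast
    ring
  · rw [if_neg h, if_neg h, if_neg h, if_neg h]; ring

set_option maxHeartbeats 1000000 in
private lemma tsum_gG (hsf : Summable (fF a k)) (hs0 : Summable (g0 a k)) :
    (∑' p : ℤ × ℤ, gG a k p) = Complex.I * ((k : ℂ) / 3) * ∑' p : ℤ × ℤ, g0 a k p := by
  have hg3 : Summable (g3 a k) := by rw [← gG_eq_g3]; exact hsg a k hsf
  have h31 : (g3 a k ∘ ⇑(sig k)) = g1 a k := funext fun p => g3_sig a k p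
  have hg1 : Summable (g1 a k) := by
    have h := hg3.comp_injective (sig k).injective
    rwa [h31] at h
  have h12 : (g1 a k ∘ ⇑(sig k)) = g2 a k := funext fun p => g1_sig a k p
  have hg2 : Summable (g2 a k) := by
    have h := hg1.comp_injective (sig k).injective
    rwa [h12] at h
  have e31 : (∑' p : ℤ × ℤ, g1 a k p) = ∑' p, g3 a k p := by
    have h := (sig k).tsum_eq (g3 a k)
    rw [← h]
    exact tsum_congr fun p => (g3_sig a k p).symm
  have e12 : (∑' p : ℤ × ℤ, g2 a k p) = ∑' p, g1 a k p := by
    have h := (sig k).tsum_eq (g1 a k)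
    rw [← h]
    exact tsum_congr fun p => (g1_sig a k p).symm
  have esum : (∑' p : ℤ × ℤ, (g1 a k p + g2 a k p + g3 a k p))
      = (∑' p, g1 a k p) + (∑' p, g2 a k p) + ∑' p, g3 a k p := by
    rw [Summable.tsum_add (hg1.add hg2) hg3, Summable.tsum_add hg1 hg2]
  have emul : (∑' p : ℤ × ℤ, (g1 a k p + g2 a k p + g3 a k p))
      = Complex.I * (k : ℂ) * ∑' p, g0 a k p := by
    rw [funext (sum3 a k)]
    exact tsum_mul_left
  rw [gG_eq_g3]
  have h3 : (3 : ℂ) * (∑' p, g3 a k p) = Complex.I * (k : ℂ) * ∑' p, g0 a k p := by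
    rw [← emul, esum, e31, e12, e31]; ring
  linear_combination h3 / 3

end Sym

/-- Resonant decomposition of the cubic mKdV nonlinearity. For real-valued `u` with
Fourier coefficients `a = û` (so `a(−k) = conj(a k)`), the `k`-th Fourier coefficient of
`(u² − (1/2π)‖u‖²_{L²})∂_x u`, namely `Σ_{k1+k2+k3=k, k1+k2≠0} a(k1)a(k2)·(ik3)·a(k3)`,
equals `i(k/3)·Σ_{k1+k2+k3=k, (k1+k2)(k2+k3)(k3+k1)≠0} a(k1)a(k2)a(k3) − ik|a(k)|²a(k)`. -/
theorem stmt_11 (a : ℤ → ℂ) (k : ℤ)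
    (hreal : ∀ n : ℤ, a (-n) = starRingEnd ℂ (a n))
    (hsum1 : Summable fun p : ℤ × ℤ =>
      if p.1 + p.2 ≠ 0 then
        a p.1 * a p.2 * (Complex.I * ((k - p.1 - p.2 : ℤ) : ℂ)) * a (k - p.1 - p.2)
      else 0)
    (hsum2 : Summable fun p : ℤ × ℤ =>
      if p.1 + p.2 ≠ 0 ∧ p.2 + (k - p.1 - p.2) ≠ 0 ∧ (k - p.1 - p.2) + p.1 ≠ 0 then
        a p.1 * a p.2 * a (k - p.1 - p.2)
      else 0) :
    (∑' p : ℤ × ℤ,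
        if p.1 + p.2 ≠ 0 then
          a p.1 * a p.2 * (Complex.I * ((k - p.1 - p.2 : ℤ) : ℂ)) * a (k - p.1 - p.2)
        else 0)
      = Complex.I * ((k : ℂ) / 3) *
          (∑' p : ℤ × ℤ,
            if p.1 + p.2 ≠ 0 ∧ p.2 + (k - p.1 - p.2) ≠ 0 ∧ (k - p.1 - p.2) + p.1 ≠ 0 then
              a p.1 * a p.2 * a (k - p.1 - p.2)
            else 0)
        - Complex.I * (k : ℂ) * (Complex.normSq (a k) : ℂ) * a k := by
  have hsf : Summable (fF a k) := hsum1
  have hs0 : Summable (g0 a k) := hsum2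
  show (∑' p : ℤ × ℤ, fF a k p)
      = Complex.I * ((k : ℂ) / 3) * (∑' p : ℤ × ℤ, g0 a k p)
        - Complex.I * (k : ℂ) * (Complex.normSq (a k) : ℂ) * a k
  have hdecomp : (∑' p : ℤ × ℤ, fF a k p) + (∑' p, fAB a k p)
      = (∑' p, gG a k p) + (∑' p, fA a k p) + ∑' p, fB a k p := by
    calc (∑' p : ℤ × ℤ, fF a k p) + (∑' p, fAB a k p)
        = ∑' p : ℤ × ℤ, (fF a k p + fAB a k p) := (Summable.tsum_add hsf (hsAB a k hsf)).symm
      _ = ∑' p : ℤ × ℤ, (gG a k p + fA a k p + fB a k p) := tsum_congr (pointwise a k)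
      _ = (∑' p, gG a k p) + (∑' p, fA a k p) + ∑' p, fB a k p := by
          rw [Summable.tsum_add ((hsg a k hsf).add (hsA a k hsf)) (hsB a k hsf),
            Summable.tsum_add (hsg a k hsf) (hsA a k hsf)]
  rw [tsum_fA a k hsf hreal, tsum_fB a k hsf hreal, tsum_fAB a k hreal,
    tsum_gG a k hsf hs0] at hdecomp
  linear_combination hdecomp
end
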